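/- Let V, U, X, Y, Z be jointly distributed finite random variables such that (i) the joint law factorizes as p(v,u)·p(x|u)·p(y,z|x) (i.e., V–U–X–(Y,Z) is a Markov chain), (ii) Y = f(X) for some deterministic function f, and (iii) X = g(Y, U) for some deterministic function g. Then I(V; Y) + H(Y | U) + I(U; Z | V) ≤ I(X; Y, Z). -/

import Mathlib

open Finset
open scoped Classical

noncomputable section

/-- Probability that the random variable `X` takes the value `a`, under the
probability mass function `μ` on the finite sample space `Ω`. -/
def pr {Ω α : Type*} [Fintype Ω] (μ : Ω → ℝ) (X : Ω → α) (a : α) : ℝ :=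
  ∑ ω, if X ω = a then μ ω else 0

/-- `μ` is a probability mass function. -/
def IsPMF {Ω : Type*} [Fintype Ω] (μ : Ω → ℝ) : Prop :=
  (∀ ω, 0 ≤ μ ω) ∧ ∑ ω, μ ω = 1

/-- Shannon entropy (base 2) of a finite random variable. -/
def ent {Ω α : Type*} [Fintype Ω] [Fintype α] (μ : Ω → ℝ) (X : Ω → α) : ℝ :=
  -∑ a, pr μ X a * Real.logb 2 (pr μ X a)

/-- Mutual information `I(X;Y)` (base 2). -/
def mi {Ω α β : Type*} [Fintype Ω] [Fintype α] [Fintype β]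
    (μ : Ω → ℝ) (X : Ω → α) (Y : Ω → β) : ℝ :=
  ent μ X + ent μ Y - ent μ (fun ω => (X ω, Y ω))

/-- Conditional entropy `H(X|Y)` (base 2). -/
def cent {Ω α β : Type*} [Fintype Ω] [Fintype α] [Fintype β]
    (μ : Ω → ℝ) (X : Ω → α) (Y : Ω → β) : ℝ :=
  ent μ (fun ω => (X ω, Y ω)) - ent μ Y

/-- Conditional mutual information `I(X;Y|Z)` (base 2). -/
def cmi {Ω α β γ : Type*} [Fintype Ω] [Fintype α] [Fintype β] [Fintype γ]
    (μ : Ω → ℝ) (X : Ω → α) (Y : Ω → β) (Z : Ω → γ) : ℝ :=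
  ent μ (fun ω => (X ω, Z ω)) + ent μ (fun ω => (Y ω, Z ω))
    - ent μ (fun ω => (X ω, Y ω, Z ω)) - ent μ Z

/-- Independence of two finite random variables. -/
def IndepRV {Ω α β : Type*} [Fintype Ω] (μ : Ω → ℝ) (X : Ω → α) (Y : Ω → β) : Prop :=
  ∀ a b, pr μ (fun ω => (X ω, Y ω)) (a, b) = pr μ X a * pr μ Y b

/-! Since `Y` is a function of `X`, `I(X;Y,Z) = H(Y) + I(X;Z|Y)`, and since `V – U – Y`,
`H(Y|U) = H(Y|U,V)`; so the claim reduces to `I(U;Z|V) ≤ I(U;Y|V) + I(X;Z|Y)`. This follows from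
`I(U;Z|V) ≤ I(U;Y,Z|V) = I(U;Y|V) + I(U;Z|Y,V)` and `I(U;Z|Y,V) ≤ I(U,V;Z|Y) = I(X;Z|Y)`, where
the last equality holds because `X = g(Y,U)`, `Y = f(X)` and `(V,U) ⊥ Z | X`. In terms of joint
entropies the argument is a single linear combination of the vanishing `I(V;Y|U)` and
`I(V,U;Z|X)` and the nonnegative `I(U;Y|Z,V)` and `I(V;Z|Y)`. -/

def CondIndep {Ω α β γ : Type*} [Fintype Ω] (μ : Ω → ℝ) (A : Ω → α) (B : Ω → β) (C : Ω → γ) :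
    Prop :=
  ∀ a b c, pr μ (fun ω => (A ω, B ω, C ω)) (a, b, c) * pr μ C c
    = pr μ (fun ω => (A ω, C ω)) (a, c) * pr μ (fun ω => (B ω, C ω)) (b, c)

section
variable {Ω α β γ : Type*} [Fintype Ω] (μ : Ω → ℝ)

theorem sum_pr_mul [Fintype α] (X : Ω → α) (F : α → ℝ) :
    ∑ a, pr μ X a * F a = ∑ ω, μ ω * F (X ω) := by
  simp only [pr, Finset.sum_mul, ite_mul, zero_mul]
  rw [Finset.sum_comm]
  simp

theorem sum_pr [Fintype α] (hμ : IsPMF μ) (X : Ω → α) : ∑ a, pr μ X a = 1 := by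
  simpa [hμ.2] using sum_pr_mul μ X (fun _ => 1)

theorem sum_pr_prod_left [Fintype α] (A : Ω → α) (C : Ω → γ) (c : γ) :
    ∑ a, pr μ (fun ω => (A ω, C ω)) (a, c) = pr μ C c := by
  simp only [pr, Prod.mk.injEq, ite_and]
  rw [Finset.sum_comm]
  simp

theorem pr_nonneg (hμ : ∀ ω, 0 ≤ μ ω) (X : Ω → α) (a : α) : 0 ≤ pr μ X a :=
  Finset.sum_nonneg fun ω _ => by split_ifs <;> simp [hμ ω]

theorem le_pr_apply (hμ : ∀ ω, 0 ≤ μ ω) (X : Ω → α) (ω : Ω) : μ ω ≤ pr μ X (X ω) := by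
  unfold pr
  simpa using Finset.single_le_sum (f := fun ω' => if X ω' = X ω then μ ω' else 0)
    (fun ω' _ => by split_ifs <;> simp [hμ ω']) (Finset.mem_univ ω)

theorem pr_apply_pos (hμ : ∀ ω, 0 ≤ μ ω) (X : Ω → α) {ω : Ω} (hω : 0 < μ ω) :
    0 < pr μ X (X ω) :=
  hω.trans_le (le_pr_apply μ hμ X ω)

theorem sum_mul_logb_nonneg (hμ : IsPMF μ) {t : Ω → ℝ} (ht : ∀ ω, 0 < μ ω → 0 < t ω)
    (hsum : ∑ ω, μ ω * (t ω)⁻¹ ≤ 1) : 0 ≤ ∑ ω, μ ω * Real.logb 2 (t ω) := by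
  have hlog : ∀ ω, μ ω * (1 - (t ω)⁻¹) ≤ μ ω * Real.log (t ω) := fun ω => by
    rcases (hμ.1 ω).eq_or_lt with h0 | hpos
    · simp [← h0]
    · exact mul_le_mul_of_nonneg_left (Real.one_sub_inv_le_log_of_pos (ht ω hpos)) hpos.le
  have : 0 ≤ ∑ ω, μ ω * Real.log (t ω) := calc
    0 ≤ ∑ ω, μ ω - ∑ ω, μ ω * (t ω)⁻¹ := by rw [hμ.2]; linarith
    _ = ∑ ω, μ ω * (1 - (t ω)⁻¹) := by simp only [mul_sub, mul_one, Finset.sum_sub_distrib]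
    _ ≤ ∑ ω, μ ω * Real.log (t ω) := Finset.sum_le_sum fun ω _ => hlog ω
  simp only [Real.logb, mul_div_assoc', ← Finset.sum_div]
  exact div_nonneg this (Real.log_nonneg one_le_two)

theorem ent_eq_neg_sum [Fintype α] (X : Ω → α) :
    ent μ X = -∑ ω, μ ω * Real.logb 2 (pr μ X (X ω)) := by
  rw [ent, sum_pr_mul μ X (fun a => Real.logb 2 (pr μ X a))]

theorem ent_congr_of_comp [Fintype α] [Fintype β] {X : Ω → α} {Y : Ω → β}
    (φ : α → β) (ψ : β → α) (hY : ∀ ω, Y ω = φ (X ω)) (hX : ∀ ω, X ω = ψ (Y ω)) :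
    ent μ X = ent μ Y := by
  have hpr : ∀ ω, pr μ X (X ω) = pr μ Y (Y ω) := fun ω =>
    Finset.sum_congr rfl fun ω' _ => if_congr
      ⟨fun h => by rw [hY, hY, h], fun h => by rw [hX, hX, h]⟩ rfl rfl
  simp only [ent_eq_neg_sum, hpr]

theorem ent_prod_comm [Fintype α] [Fintype β] (A : Ω → α) (B : Ω → β) :
    ent μ (fun ω => (A ω, B ω)) = ent μ (fun ω => (B ω, A ω)) :=
  ent_congr_of_comp μ Prod.swap Prod.swap (fun _ => rfl) (fun _ => rfl)

end

section
variable {Ω α β γ : Type*} [Fintype Ω] [Fintype α] [Fintype β] [Fintype γ] (μ : Ω → ℝ)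

theorem cmi_eq_sum (hμ : ∀ ω, 0 ≤ μ ω) (A : Ω → α) (B : Ω → β) (C : Ω → γ) :
    cmi μ A B C = ∑ ω, μ ω * Real.logb 2
      (pr μ (fun ω => (A ω, B ω, C ω)) (A ω, B ω, C ω) * pr μ C (C ω) /
        (pr μ (fun ω => (A ω, C ω)) (A ω, C ω) * pr μ (fun ω => (B ω, C ω)) (B ω, C ω))) := by
  have hsplit : ∀ ω, μ ω * Real.logb 2
      (pr μ (fun ω => (A ω, B ω, C ω)) (A ω, B ω, C ω) * pr μ C (C ω) /
        (pr μ (fun ω => (A ω, C ω)) (A ω, C ω) * pr μ (fun ω => (B ω, C ω)) (B ω, C ω)))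
      = μ ω * Real.logb 2 (pr μ (fun ω => (A ω, B ω, C ω)) (A ω, B ω, C ω))
        + μ ω * Real.logb 2 (pr μ C (C ω))
        - μ ω * Real.logb 2 (pr μ (fun ω => (A ω, C ω)) (A ω, C ω))
        - μ ω * Real.logb 2 (pr μ (fun ω => (B ω, C ω)) (B ω, C ω)) := fun ω => by
    rcases (hμ ω).eq_or_lt with h0 | hpos
    · simp [← h0]
    have := pr_apply_pos μ hμ (fun ω => (A ω, B ω, C ω)) hpos
    have := pr_apply_pos μ hμ C hpos
    have := pr_apply_pos μ hμ (fun ω => (A ω, C ω)) hpos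
    have := pr_apply_pos μ hμ (fun ω => (B ω, C ω)) hpos
    rw [Real.logb_div (by positivity) (by positivity),
      Real.logb_mul (by positivity) (by positivity), Real.logb_mul (by positivity) (by positivity)]
    ring
  simp only [cmi, ent_eq_neg_sum, hsplit, Finset.sum_add_distrib, Finset.sum_sub_distrib]
  ring

theorem sum_mul_cmi_ratio_le_one (hμ : IsPMF μ) (A : Ω → α) (B : Ω → β) (C : Ω → γ) :
    ∑ ω, μ ω * (pr μ (fun ω => (A ω, C ω)) (A ω, C ω) * pr μ (fun ω => (B ω, C ω)) (B ω, C ω) /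
      (pr μ (fun ω => (A ω, B ω, C ω)) (A ω, B ω, C ω) * pr μ C (C ω))) ≤ 1 := by
  rw [← sum_pr_mul μ (fun ω => (A ω, B ω, C ω)) fun x =>
    pr μ (fun ω => (A ω, C ω)) (x.1, x.2.2) * pr μ (fun ω => (B ω, C ω)) (x.2.1, x.2.2) /
      (pr μ (fun ω => (A ω, B ω, C ω)) x * pr μ C x.2.2)]
  calc _ ≤ ∑ x : α × β × γ, pr μ (fun ω => (A ω, C ω)) (x.1, x.2.2)
          * pr μ (fun ω => (B ω, C ω)) (x.2.1, x.2.2) / pr μ C x.2.2 := by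
        refine Finset.sum_le_sum fun x _ => ?_
        rcases eq_or_ne (pr μ (fun ω => (A ω, B ω, C ω)) x) 0 with h0 | hne
        · rw [h0, zero_mul]
          exact div_nonneg (mul_nonneg (pr_nonneg μ hμ.1 _ _) (pr_nonneg μ hμ.1 _ _))
            (pr_nonneg μ hμ.1 _ _)
        · rw [← mul_div_assoc, mul_div_mul_left _ _ hne]
    _ = ∑ c, (∑ a, pr μ (fun ω => (A ω, C ω)) (a, c))
          * (∑ b, pr μ (fun ω => (B ω, C ω)) (b, c)) / pr μ C c := by
        simp only [Fintype.sum_prod_type, Finset.sum_mul_sum, Finset.sum_div]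
        exact (Finset.sum_congr rfl fun a _ => Finset.sum_comm).trans Finset.sum_comm
    _ = ∑ c, pr μ C c * pr μ C c / pr μ C c := by simp only [sum_pr_prod_left]
    _ ≤ ∑ c, pr μ C c := Finset.sum_le_sum fun c _ => by
        rcases eq_or_ne (pr μ C c) 0 with h0 | hne
        · simp [h0]
        · rw [mul_div_cancel_right₀ _ hne]
    _ = 1 := sum_pr μ hμ C

theorem cmi_nonneg (hμ : IsPMF μ) (A : Ω → α) (B : Ω → β) (C : Ω → γ) : 0 ≤ cmi μ A B C := by
  rw [cmi_eq_sum μ hμ.1]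
  refine sum_mul_logb_nonneg μ hμ (fun ω hω => ?_) ?_
  · have := pr_apply_pos μ hμ.1 (fun ω => (A ω, B ω, C ω)) hω
    have := pr_apply_pos μ hμ.1 C hω
    have := pr_apply_pos μ hμ.1 (fun ω => (A ω, C ω)) hω
    have := pr_apply_pos μ hμ.1 (fun ω => (B ω, C ω)) hω
    positivity
  · simpa only [inv_div] using sum_mul_cmi_ratio_le_one μ hμ A B C

theorem cmi_eq_zero_of_condIndep (hμ : ∀ ω, 0 ≤ μ ω) {A : Ω → α} {B : Ω → β} {C : Ω → γ}
    (h : CondIndep μ A B C) : cmi μ A B C = 0 := by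
  rw [cmi_eq_sum μ hμ]
  refine Finset.sum_eq_zero fun ω _ => ?_
  rw [h]
  rcases eq_or_ne (pr μ (fun ω => (A ω, C ω)) (A ω, C ω) * pr μ (fun ω => (B ω, C ω)) (B ω, C ω))
    0 with h0 | hne
  · simp [h0]
  · simp [div_self hne]

theorem cmi_comp_right_le {β' : Type*} [Fintype β'] (hμ : IsPMF μ)
    (A : Ω → α) (B : Ω → β) (C : Ω → γ) (h : β → β') :
    cmi μ A (fun ω => h (B ω)) C ≤ cmi μ A B C := by
  have hB := ent_congr_of_comp μ (X := fun ω => (B ω, h (B ω), C ω)) (Y := fun ω => (B ω, C ω))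
    (fun p => (p.1, p.2.2)) (fun p => (p.1, h p.1, p.2)) (fun _ => rfl) (fun _ => rfl)
  have hAB := ent_congr_of_comp μ (X := fun ω => (A ω, B ω, h (B ω), C ω))
    (Y := fun ω => (A ω, B ω, C ω))
    (fun p => (p.1, p.2.1, p.2.2.2)) (fun p => (p.1, p.2.1, h p.2.1, p.2.2)) (fun _ => rfl)
    (fun _ => rfl)
  -- chain rule: `I(A;B|C) = I(A;h B|C) + I(A;B|h B,C)`
  have := cmi_nonneg μ hμ A B (fun ω => (h (B ω), C ω))
  simp only [cmi] at this ⊢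
  linarith

end

/-- If `V–U–X–(Y,Z)` is a Markov chain (i.e. `V ⊥ (X,Y,Z) | U` and
`(V,U) ⊥ (Y,Z) | X`), `Y = f(X)` and `X = g(Y,U)`, then
`I(V;Y) + H(Y|U) + I(U;Z|V) ≤ I(X;Y,Z)`. -/
theorem stmt12 {Ω τv τu τx τy τz : Type*} [Fintype Ω]
    [Fintype τv] [Fintype τu] [Fintype τx] [Fintype τy] [Fintype τz]
    (μ : Ω → ℝ) (hμ : IsPMF μ)
    (V : Ω → τv) (U : Ω → τu) (X : Ω → τx) (Y : Ω → τy) (Z : Ω → τz)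
    (f : τx → τy) (hf : ∀ ω, Y ω = f (X ω))
    (g : τy → τu → τx) (hg : ∀ ω, X ω = g (Y ω) (U ω))
    (hMarkov1 : ∀ v xyz u,
      pr μ (fun ω => (V ω, (X ω, Y ω, Z ω), U ω)) (v, xyz, u) * pr μ U u
        = pr μ (fun ω => (V ω, U ω)) (v, u)
          * pr μ (fun ω => ((X ω, Y ω, Z ω), U ω)) (xyz, u))
    (hMarkov2 : ∀ vu yz x,
      pr μ (fun ω => ((V ω, U ω), (Y ω, Z ω), X ω)) (vu, yz, x) * pr μ X x
        = pr μ (fun ω => ((V ω, U ω), X ω)) (vu, x)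
          * pr μ (fun ω => ((Y ω, Z ω), X ω)) (yz, x)) :
    mi μ V Y + cent μ Y U + cmi μ U Z V ≤ mi μ X (fun ω => (Y ω, Z ω)) := by
  -- `hMarkov1` and `hMarkov2` unfold to `CondIndep μ V (X,Y,Z) U` and `CondIndep μ (V,U) (Y,Z) X`.
  have hVY : cmi μ V Y U ≤ 0 :=
    (cmi_comp_right_le μ hμ V (fun ω => (X ω, Y ω, Z ω)) U fun p => p.2.1).trans
      (cmi_eq_zero_of_condIndep μ hμ.1 hMarkov1).le
  have hVUZ : cmi μ (fun ω => (V ω, U ω)) Z X ≤ 0 :=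
    (cmi_comp_right_le μ hμ (fun ω => (V ω, U ω)) (fun ω => (Y ω, Z ω)) X Prod.snd).trans
      (cmi_eq_zero_of_condIndep μ hμ.1 hMarkov2).le
  have hUY := cmi_nonneg μ hμ U Y fun ω => (Z ω, V ω)
  have hVZ := cmi_nonneg μ hμ V Z Y
  have hUV := ent_prod_comm μ U V
  have hZY := ent_prod_comm μ Z Y
  have hYZV := ent_congr_of_comp μ (X := fun ω => (Y ω, Z ω, V ω)) (Y := fun ω => (V ω, Z ω, Y ω))
    (fun p => (p.2.2, p.2.1, p.1)) (fun p => (p.2.2, p.2.1, p.1)) (fun _ => rfl) (fun _ => rfl)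
  have hXYZ := ent_congr_of_comp μ (X := fun ω => (X ω, Y ω, Z ω)) (Y := fun ω => (Z ω, X ω))
    (fun p => (p.2.2, p.1)) (fun p => (p.2, f p.2, p.1)) (fun _ => rfl) (fun ω => by simp [hf])
  have hVUX := ent_congr_of_comp μ (X := fun ω => ((V ω, U ω), X ω)) (Y := fun ω => (V ω, Y ω, U ω))
    (fun q => (q.1.1, f q.2, q.1.2)) (fun q => ((q.1, q.2.2), g q.2.1 q.2.2))
    (fun ω => by simp [hf]) (fun ω => by simp [hg])
  have hVUZX := ent_congr_of_comp μ (X := fun ω => ((V ω, U ω), Z ω, X ω))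
    (Y := fun ω => (U ω, Y ω, Z ω, V ω))
    (fun q => (q.1.2, f q.2.2, q.2.1, q.1.1)) (fun q => ((q.2.2.2, q.1), q.2.2.1, g q.2.1 q.1))
    (fun ω => by simp [hf]) (fun ω => by simp [hg])
  simp only [mi, cent, cmi] at *
  linarith
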